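/- arXiv:2001.02530 — 3 statements merged into one kernel-verified Lean document; each statement's English description precedes it below -/
import Mathlib

section
/- Let p_1, …, p_n be nonnegative real numbers and let C_1, …, C_n be reals satisfying C_j ≥ ∑_{i=1}^j p_i for every j. Then ∑_{j=1}^n p_j·C_j ≥ (1/2)·((∑_{i=1}^n p_i)² + ∑_{i=1}^n p_i²). -/
theorem two_mul_sum_Icc_mul_sum_Icc {R : Type*} [CommSemiring R] (n : ℕ) (p : ℕ → R) :
    2 * ∑ j ∈ Finset.Icc 1 n, p j * ∑ i ∈ Finset.Icc 1 j, p i =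
      (∑ i ∈ Finset.Icc 1 n, p i) ^ 2 + ∑ i ∈ Finset.Icc 1 n, p i ^ 2 := by
  induction n with
  | zero => simp
  | succ m ih =>
    simp only [Finset.sum_Icc_succ_top (Nat.le_add_left 1 m), mul_add, ih]
    ring

/-- Inequality (4.4): if `C j ≥ ∑_{i=1}^j p i` for every `j` with `p i ≥ 0`, then
`∑_{j=1}^n p_j·C_j ≥ ½·((∑_{i=1}^n p_i)² + ∑_{i=1}^n p_i²)`. -/
theorem valid_inequality (n : ℕ) (p C : ℕ → ℝ)
    (hp : ∀ i ∈ Finset.Icc 1 n, 0 ≤ p i)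
    (hC : ∀ j ∈ Finset.Icc 1 n, C j ≥ ∑ i ∈ Finset.Icc 1 j, p i) :
    ∑ j ∈ Finset.Icc 1 n, p j * C j ≥
      (1 / 2) * ((∑ i ∈ Finset.Icc 1 n, p i) ^ 2 + ∑ i ∈ Finset.Icc 1 n, (p i) ^ 2) := by
  calc (1 / 2) * ((∑ i ∈ Finset.Icc 1 n, p i) ^ 2 + ∑ i ∈ Finset.Icc 1 n, (p i) ^ 2)
      = ∑ j ∈ Finset.Icc 1 n, p j * ∑ i ∈ Finset.Icc 1 j, p i := by
        rw [← two_mul_sum_Icc_mul_sum_Icc]; ring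
    _ ≤ ∑ j ∈ Finset.Icc 1 n, p j * C j :=
        Finset.sum_le_sum fun j hj => mul_le_mul_of_nonneg_left (hC j hj) (hp j hj)
end

section
/- Let θ ≥ 0 and τ ≥ 0 be reals, let p_1, …, p_n be positive reals with τ ≤ θ·p_i for every i, let r_1, …, r_n be reals, and let C̄_1 ≤ C̄_2 ≤ … ≤ C̄_n be reals such that r_i ≤ C̄_i for every i and such that for every j, C̄_j · ∑_{i=1}^j p_i ≥ (1/2)·((∑_{i=1}^j p_i)² + ∑_{i=1}^j p_i²). Then for every j, max_{1 ≤ i ≤ j} r_i + ∑_{i=1}^j p_i + j·τ ≤ (3+2θ)·C̄_j. -/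
/-!
The three summands are bounded separately. Every release date `rᵢ` with `i ≤ j` is at most
`C̄ᵢ ≤ C̄_j`. Dropping `∑ pᵢ² ≥ 0` from the LP inequality and dividing by `∑_{i ≤ j} pᵢ > 0`
gives `∑_{i ≤ j} pᵢ ≤ 2 C̄_j`. Summing `τ ≤ θ pᵢ` over `i ≤ j` gives `j τ ≤ θ ∑_{i ≤ j} pᵢ ≤ 2θ C̄_j`.
-/

open Finset

lemma le_two_mul_of_half_sq_add_le_mul {S Q c : ℝ} (hS : 0 < S) (hQ : 0 ≤ Q)
    (h : c * S ≥ 1 / 2 * (S ^ 2 + Q)) : S ≤ 2 * c := by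
  nlinarith

lemma Finset.sum_le_two_mul_of_half_sq_add_le_mul {ι : Type*} {s : Finset ι} {p : ι → ℝ}
    {c : ℝ} (hS : 0 < ∑ i ∈ s, p i)
    (h : c * ∑ i ∈ s, p i ≥ 1 / 2 * ((∑ i ∈ s, p i) ^ 2 + ∑ i ∈ s, p i ^ 2)) :
    ∑ i ∈ s, p i ≤ 2 * c :=
  le_two_mul_of_half_sq_add_le_mul hS (sum_nonneg fun i _ => sq_nonneg (p i)) h

lemma Finset.card_mul_le_mul_sum {ι : Type*} {s : Finset ι} {p : ι → ℝ} {θ τ : ℝ}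
    (h : ∀ i ∈ s, τ ≤ θ * p i) : #s * τ ≤ θ * ∑ i ∈ s, p i := by
  simpa [mul_sum] using card_nsmul_le_sum s (fun i => θ * p i) τ h

theorem schedule_by_Cbar_general (n : ℕ) (θ τ : ℝ) (hθ : 0 ≤ θ)
    (p r C : ℕ → ℝ)
    (hp : ∀ i ∈ Finset.Icc 1 n, 0 < p i)
    (hτp : ∀ i ∈ Finset.Icc 1 n, τ ≤ θ * p i)
    (hmono : ∀ i ∈ Finset.Icc 1 n, ∀ j ∈ Finset.Icc 1 n, i ≤ j → C i ≤ C j)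
    (hr : ∀ i ∈ Finset.Icc 1 n, r i ≤ C i)
    (hLP : ∀ j ∈ Finset.Icc 1 n,
      C j * (∑ i ∈ Finset.Icc 1 j, p i) ≥
        (1 / 2) * ((∑ i ∈ Finset.Icc 1 j, p i) ^ 2 + ∑ i ∈ Finset.Icc 1 j, (p i) ^ 2)) :
    ∀ j, ∀ hj : j ∈ Finset.Icc 1 n,
      (Finset.Icc 1 j).sup' (Finset.nonempty_Icc.mpr (Finset.mem_Icc.mp hj).1) r +
        (∑ i ∈ Finset.Icc 1 j, p i) + (j : ℝ) * τ ≤ (3 + 2 * θ) * C j := by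
  intro j hj
  obtain ⟨hj1, hjn⟩ := mem_Icc.mp hj
  have hsub : Icc 1 j ⊆ Icc 1 n := Icc_subset_Icc_right hjn
  have hrelease : (Icc 1 j).sup' (nonempty_Icc.mpr hj1) r ≤ C j :=
    sup'_le _ _ fun i hi => (hr i (hsub hi)).trans (hmono i (hsub hi) j hj (mem_Icc.mp hi).2)
  have hwork : ∑ i ∈ Icc 1 j, p i ≤ 2 * C j :=
    sum_le_two_mul_of_half_sq_add_le_mul
      (sum_pos (fun i hi => hp i (hsub hi)) (nonempty_Icc.mpr hj1)) (hLP j hj)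
  have hsetup : (j : ℝ) * τ ≤ θ * ∑ i ∈ Icc 1 j, p i := by
    simpa using card_mul_le_mul_sum fun i hi => hτp i (hsub hi)
  linarith [mul_le_mul_of_nonneg_left hwork hθ]

/-- Schedule-by-C̄ is a (3+2θ)-approximation: with positive processing times `p`,
`τ ≤ θ·pᵢ`, release dates `r i ≤ C i`, nondecreasing LP completion times `C`, and the
LP valid inequalities, for every `j`,
`max_{1 ≤ i ≤ j} rᵢ + ∑_{i=1}^j pᵢ + j·τ ≤ (3+2θ)·C j`. -/
theorem schedule_by_Cbar (n : ℕ) (θ τ : ℝ) (hθ : 0 ≤ θ) (hτ : 0 ≤ τ)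
    (p r C : ℕ → ℝ)
    (hp : ∀ i ∈ Finset.Icc 1 n, 0 < p i)
    (hτp : ∀ i ∈ Finset.Icc 1 n, τ ≤ θ * p i)
    (hmono : ∀ i ∈ Finset.Icc 1 n, ∀ j ∈ Finset.Icc 1 n, i ≤ j → C i ≤ C j)
    (hr : ∀ i ∈ Finset.Icc 1 n, r i ≤ C i)
    (hLP : ∀ j ∈ Finset.Icc 1 n,
      C j * (∑ i ∈ Finset.Icc 1 j, p i) ≥
        (1 / 2) * ((∑ i ∈ Finset.Icc 1 j, p i) ^ 2 + ∑ i ∈ Finset.Icc 1 j, (p i) ^ 2)) :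
    ∀ j, ∀ hj : j ∈ Finset.Icc 1 n,
      (Finset.Icc 1 j).sup' (Finset.nonempty_Icc.mpr (Finset.mem_Icc.mp hj).1) r +
        (∑ i ∈ Finset.Icc 1 j, p i) + (j : ℝ) * τ ≤ (3 + 2 * θ) * C j :=
  schedule_by_Cbar_general n θ τ hθ p r C hp hτp hmono hr hLP
end

section
/- Fix integers k ≥ 2 and l ≥ 1. For n ∈ ℕ define f(n) = [ (knl·(knl+1))/2 + n²·l·(kn·(kn+1))/2 ] / [ (knl·(knl+1))/2 + n³·l·(k·(k+1))/2 ]. Then f(n) → ∞ as n → ∞. -/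
/-!
For `n ≥ 1` the `l`-limited cost is at least `k² l n⁴ / 2` (its second summand alone), while the
optimal cost is at most `2 k² l² n³`, because every factor `k n l + 1`, `k + 1`, `l` and `n²` can
be bounded by `2 k n l`, `2 k`, `l²` and `n³`. Hence `f(n) ≥ n / (4 l)`.
-/

open Filter

-- The numerator `C^l(I)` and denominator `C^*(I)` of `f`, as functions of a real `x = n`.
noncomputable def limitedCost (k l x : ℝ) : ℝ :=
  k * x * l * (k * x * l + 1) / 2 + x ^ 2 * l * (k * x * (k * x + 1)) / 2

noncomputable def optimalCost (k l x : ℝ) : ℝ :=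
  k * x * l * (k * x * l + 1) / 2 + x ^ 3 * l * (k * (k + 1)) / 2

variable {k l x : ℝ}

theorem le_limitedCost (hk : 0 ≤ k) (hl : 0 ≤ l) (hx : 0 ≤ x) :
    k ^ 2 * l * x ^ 4 / 2 ≤ limitedCost k l x := by
  have h : limitedCost k l x =
      k ^ 2 * l * x ^ 4 / 2 + (k * x * l * (k * x * l + 1) + k * l * x ^ 3) / 2 := by
    unfold limitedCost; ring
  rw [h]
  exact le_add_of_nonneg_right (by positivity)

theorem optimalCost_le (hk : 1 ≤ k) (hl : 1 ≤ l) (hx : 1 ≤ x) :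
    optimalCost k l x ≤ 2 * k ^ 2 * l ^ 2 * x ^ 3 := by
  have hkxl : 1 ≤ k * x * l := one_le_mul_of_one_le_of_one_le
    (one_le_mul_of_one_le_of_one_le hk hx) hl
  have hl2 : l ≤ l ^ 2 := by nlinarith
  have hx23 : x ^ 2 ≤ x ^ 3 := pow_le_pow_right₀ hx (by norm_num)
  calc optimalCost k l x
      ≤ k * x * l * (k * x * l + k * x * l) / 2 + x ^ 3 * l * (k * (k + k)) / 2 := by
        unfold optimalCost; gcongr
    _ = k ^ 2 * l ^ 2 * x ^ 2 + k ^ 2 * l * x ^ 3 := by ring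
    _ ≤ k ^ 2 * l ^ 2 * x ^ 3 + k ^ 2 * l ^ 2 * x ^ 3 := by gcongr
    _ = 2 * k ^ 2 * l ^ 2 * x ^ 3 := by ring

theorem div_le_limitedCost_div_optimalCost (hk : 1 ≤ k) (hl : 1 ≤ l) (hx : 1 ≤ x) :
    x / (4 * l) ≤ limitedCost k l x / optimalCost k l x := by
  have hk0 : 0 < k := by linarith
  have hl0 : 0 < l := by linarith
  have hx0 : 0 < x := by linarith
  have hnum := le_limitedCost hk0.le hl0.le hx0.le
  calc x / (4 * l) = (k ^ 2 * l * x ^ 4 / 2) / (2 * k ^ 2 * l ^ 2 * x ^ 3) := by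
        field_simp; ring
    _ ≤ limitedCost k l x / optimalCost k l x :=
        div_le_div₀ (le_trans (by positivity) hnum) hnum (by unfold optimalCost; positivity)
          (optimalCost_le hk hl hx)

/-- Corollary 1: the ratio for the `l`-limited policy diverges, so it has no constant
competitive ratio. -/
theorem l_limited_no_constant_ratio (k l : ℕ) (hk : 2 ≤ k) (hl : 1 ≤ l) :
    Filter.Tendsto
      (fun n : ℕ =>
        (((k : ℝ) * n * l * ((k : ℝ) * n * l + 1)) / 2 +
            (n : ℝ) ^ 2 * l * ((k : ℝ) * n * ((k : ℝ) * n + 1)) / 2) /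
          (((k : ℝ) * n * l * ((k : ℝ) * n * l + 1)) / 2 +
            (n : ℝ) ^ 3 * l * ((k : ℝ) * ((k : ℝ) + 1)) / 2))
      Filter.atTop Filter.atTop := by
  change Tendsto (fun n : ℕ => limitedCost k l n / optimalCost k l n) atTop atTop
  have hk' : (1 : ℝ) ≤ k := by exact_mod_cast one_le_two.trans hk
  have hl' : (1 : ℝ) ≤ l := by exact_mod_cast hl
  refine tendsto_atTop_mono' _ ?_
    (tendsto_natCast_atTop_atTop.atTop_div_const (by linarith : (0 : ℝ) < 4 * l))
  filter_upwards [eventually_ge_atTop 1] with n hn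
  exact div_le_limitedCost_div_optimalCost hk' hl' (by exact_mod_cast hn)
end
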